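/- arXiv:1412.2379 — 4 statements merged into one kernel-verified Lean document; each statement's English description precedes it below -/
import Mathlib

section
/- The minimal weighted L∞ error ε_opt of an optimal b-step approximation equals opt(I) for some nonempty interval I = {i,...,j} ⊆ {1,...,n}; that is, ε_opt is an entry of the matrix E of single-interval optimal errors. -/
def IsStepFn (n b : ℕ) (f : Fin n → ℝ) : Prop :=
  ∃ j : ℕ → ℕ, j 0 = 0 ∧ j b = n ∧ (∀ k, j k ≤ j (k + 1)) ∧
    ∃ C : ℕ → ℝ, ∀ (i : Fin n) (k : ℕ), k < b →
      j k ≤ (i : ℕ) → (i : ℕ) < j (k + 1) → f i = C k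

noncomputable def errW {n : ℕ} [NeZero n] (y w f : Fin n → ℝ) : ℝ :=
  Finset.univ.sup' Finset.univ_nonempty fun i => w i * |f i - y i|

section Aux

variable {n : ℕ} (y w : Fin n → ℝ)

/-- min over z of the weighted sup over a nonempty set is attained. -/
lemma exists_min_sup (s : Finset (Fin n)) (hs : s.Nonempty) (hw : ∀ i, 0 < w i) :
    ∃ z : ℝ, ∀ z' : ℝ,
      s.sup' hs (fun k => w k * |z - y k|) ≤ s.sup' hs (fun k => w k * |z' - y k|) := by
  set G : ℝ → ℝ := fun z => s.sup' hs (fun k => w k * |z - y k|) with hG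
  have hcont : Continuous G := by
    apply Continuous.finset_sup'_apply hs
    intro i _
    exact continuous_const.mul ((continuous_id.sub continuous_const).abs)
  set a := s.inf' hs y with ha
  set c := s.sup' hs y with hc
  have hac : a ≤ c := by
    obtain ⟨k, hk⟩ := hs
    exact le_trans (Finset.inf'_le _ hk) (Finset.le_sup' _ hk)
  obtain ⟨z, hzmem, hz⟩ := (isCompact_Icc (a := a) (b := c)).exists_isMinOn
    (Set.nonempty_Icc.mpr hac) hcont.continuousOn
  refine ⟨z, fun z' => ?_⟩
  set u := max a (min z' c) with hu
  have humem : u ∈ Set.Icc a c := by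
    constructor
    · exact le_max_left _ _
    · exact max_le hac (min_le_right _ _)
  have h1 : G u ≤ G z' := by
    apply Finset.sup'_le
    intro k hk
    have hyk1 : a ≤ y k := Finset.inf'_le _ hk
    have hyk2 : y k ≤ c := Finset.le_sup' _ hk
    have habs : |u - y k| ≤ |z' - y k| := by
      rcases le_total z' a with h | h
      · have hu' : u = a := by
          rw [hu, max_eq_left (le_trans (min_le_left _ _) h)]
        rw [hu', abs_of_nonpos (by linarith), abs_of_nonpos (by linarith)]
        linarith
      · rcases le_total c z' with h2 | h2
        · have hu' : u = c := by rw [hu, min_eq_right h2, max_eq_right hac]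
          rw [hu', abs_of_nonneg (by linarith), abs_of_nonneg (by linarith)]
          linarith
        · have hu' : u = z' := by rw [hu, min_eq_left h2, max_eq_right h]
          rw [hu']
    calc w k * |u - y k| ≤ w k * |z' - y k| :=
          mul_le_mul_of_nonneg_left habs (hw k).le
      _ ≤ G z' := Finset.le_sup' (fun k => w k * |z' - y k|) hk
  exact le_trans (hz humem) h1

/-- the single-interval optimal error matrix, totalized. -/
noncomputable def Eij (i j : Fin n) : ℝ :=
  if h : i ≤ j then
    ⨅ z : ℝ, (Finset.Icc i j).sup' (Finset.nonempty_Icc.mpr h)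
      fun k => w k * |z - y k|
  else 0

lemma sup_nonneg' {s : Finset (Fin n)} (hs : s.Nonempty) (hw : ∀ i, 0 < w i) (z : ℝ) :
    0 ≤ s.sup' hs (fun k => w k * |z - y k|) := by
  obtain ⟨k, hk⟩ := hs
  exact le_trans (mul_nonneg (hw k).le (abs_nonneg _))
    (Finset.le_sup' (fun k => w k * |z - y k|) hk)

lemma Eij_spec (hw : ∀ i, 0 < w i) {i j : Fin n} (h : i ≤ j) :
    ∃ z : ℝ,
      Eij y w i j = (Finset.Icc i j).sup' (Finset.nonempty_Icc.mpr h)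
        (fun k => w k * |z - y k|) ∧
      ∀ z' : ℝ, (Finset.Icc i j).sup' (Finset.nonempty_Icc.mpr h)
          (fun k => w k * |z - y k|) ≤
        (Finset.Icc i j).sup' (Finset.nonempty_Icc.mpr h)
          (fun k => w k * |z' - y k|) := by
  obtain ⟨z, hz⟩ := exists_min_sup y w _ (Finset.nonempty_Icc.mpr h) hw
  refine ⟨z, ?_, hz⟩
  rw [Eij, dif_pos h]
  apply le_antisymm
  · exact ciInf_le ⟨0, by rintro _ ⟨z', rfl⟩; exact sup_nonneg' y w _ hw z'⟩ z
  · exact le_ciInf hz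

lemma Eij_le (hw : ∀ i, 0 < w i) {i j : Fin n} (h : i ≤ j) (z' : ℝ) :
    Eij y w i j ≤ (Finset.Icc i j).sup' (Finset.nonempty_Icc.mpr h)
      (fun k => w k * |z' - y k|) := by
  obtain ⟨z, h1, h2⟩ := Eij_spec y w hw h
  rw [h1]; exact h2 z'

end Aux

section Main

variable {n b : ℕ} [NeZero n]

/-- Key lemma: for any `b`-step function `f`, there is an interval `[i,j]` such that
`E i j ≤ errW f` and `E i j` is itself achieved by some `b`-step function. -/
lemma stepfn_key (hb : 1 ≤ b) (y w : Fin n → ℝ) (hw : ∀ i, 0 < w i)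
    (f : Fin n → ℝ) (hf : IsStepFn n b f) :
    ∃ i j : Fin n, i ≤ j ∧ Eij y w i j ≤ errW y w f ∧
      ∃ g, IsStepFn n b g ∧ errW y w g = Eij y w i j := by
  classical
  have hn : 0 < n := Nat.pos_of_ne_zero (NeZero.ne n)
  obtain ⟨j, hj0, hjb, hstep, C, hC⟩ := hf
  have hm : Monotone j := monotone_nat_of_le_succ hstep
  have hjn : ∀ k, k ≤ b → j k ≤ n := fun k hk => hjb ▸ hm hk
  set K : Finset ℕ := (Finset.range b).filter (fun k => j k < j (k + 1)) with hKdef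
  have hK : K.Nonempty := by
    by_contra hne
    have hall : ∀ k, k < b → j (k + 1) = j k := by
      intro k hk
      have : k ∉ K := fun hmem => hne ⟨k, hmem⟩
      rw [hKdef, Finset.mem_filter, Finset.mem_range] at this
      push_neg at this
      exact le_antisymm (this hk) (hstep k)
    have hz : ∀ k, k ≤ b → j k = 0 := by
      intro k
      induction k with
      | zero => intro _; exact hj0
      | succ m ih =>
        intro hk
        have hmb : m < b := hk
        rw [hall m hmb, ih hmb.le]
    have := hz b le_rfl
    omega
  -- facts about members of K
  have hKfact : ∀ k ∈ K, k < b ∧ j k < j (k + 1) ∧ j (k + 1) ≤ n := by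
    intro k hk
    rw [hKdef, Finset.mem_filter, Finset.mem_range] at hk
    exact ⟨hk.1, hk.2, hjn _ hk.1⟩
  -- interval endpoints, totalized
  set ik : ℕ → Fin n := fun k => ⟨min (j k) (n - 1), by omega⟩ with hikdef
  set jk : ℕ → Fin n := fun k => ⟨min (j (k + 1) - 1) (n - 1), by omega⟩ with hjkdef
  have hikval : ∀ k ∈ K, (ik k : ℕ) = j k := by
    intro k hk
    obtain ⟨h1, h2, h3⟩ := hKfact k hk
    simp only [hikdef]
    omega
  have hjkval : ∀ k ∈ K, (jk k : ℕ) = j (k + 1) - 1 := by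
    intro k hk
    obtain ⟨h1, h2, h3⟩ := hKfact k hk
    simp only [hjkdef]
    omega
  have hik_le : ∀ k ∈ K, ik k ≤ jk k := by
    intro k hk
    obtain ⟨h1, h2, h3⟩ := hKfact k hk
    rw [Fin.le_def, hikval k hk, hjkval k hk]
    omega
  have hmem_iff : ∀ k ∈ K, ∀ m : Fin n,
      m ∈ Finset.Icc (ik k) (jk k) ↔ (j k ≤ (m : ℕ) ∧ (m : ℕ) < j (k + 1)) := by
    intro k hk m
    obtain ⟨h1, h2, h3⟩ := hKfact k hk
    rw [Finset.mem_Icc, Fin.le_def, Fin.le_def, hikval k hk, hjkval k hk]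
    omega
  -- each piece's optimal error is at most errW f
  have hpiece : ∀ k ∈ K, Eij y w (ik k) (jk k) ≤ errW y w f := by
    intro k hk
    obtain ⟨h1, h2, h3⟩ := hKfact k hk
    refine le_trans (Eij_le y w hw (hik_le k hk) (C k)) ?_
    apply Finset.sup'_le
    intro m hm
    rw [hmem_iff k hk m] at hm
    rw [← hC m k h1 hm.1 hm.2]
    exact Finset.le_sup' (fun i => w i * |f i - y i|) (Finset.mem_univ m)
  -- index function
  set idx : Fin n → ℕ := fun i => Nat.findGreatest (fun k => j k ≤ (i : ℕ)) b with hidxdef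
  have hidx1 : ∀ i : Fin n, j (idx i) ≤ (i : ℕ) := by
    intro i
    exact Nat.findGreatest_spec (P := fun k => j k ≤ (i : ℕ)) (m := 0)
      (Nat.zero_le b) (by show j 0 ≤ (i : ℕ); rw [hj0]; exact Nat.zero_le _)
  have hidxle : ∀ i : Fin n, idx i < b := by
    intro i
    have h1 : idx i ≤ b := Nat.findGreatest_le b
    rcases lt_or_eq_of_le h1 with h | h
    · exact h
    · exfalso
      have := hidx1 i
      rw [h, hjb] at this
      exact absurd this (by omega)
  have hidx2 : ∀ i : Fin n, (i : ℕ) < j (idx i + 1) := by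
    intro i
    by_contra hcon
    push_neg at hcon
    have h5 : idx i + 1 ≤ idx i :=
      Nat.le_findGreatest (Nat.succ_le_of_lt (hidxle i)) hcon
    omega
  have huniq : ∀ (i : Fin n) (k : ℕ), k < b → j k ≤ (i : ℕ) → (i : ℕ) < j (k + 1) →
      idx i = k := by
    intro i k hk h1 h2
    rcases lt_trichotomy (idx i) k with h | h | h
    · have : j (idx i + 1) ≤ j k := hm h
      have := hidx2 i
      omega
    · exact h
    · have : j (k + 1) ≤ j (idx i) := hm h
      have := hidx1 i
      omega
  -- choose optimal constant for each interval
  have H : ∀ i j : Fin n, ∃ z : ℝ, ∀ h : i ≤ j,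
      Eij y w i j = (Finset.Icc i j).sup' (Finset.nonempty_Icc.mpr h)
        (fun k => w k * |z - y k|) ∧
      ∀ z' : ℝ, (Finset.Icc i j).sup' (Finset.nonempty_Icc.mpr h)
          (fun k => w k * |z - y k|) ≤
        (Finset.Icc i j).sup' (Finset.nonempty_Icc.mpr h)
          (fun k => w k * |z' - y k|) := by
    intro i j'
    by_cases h : i ≤ j'
    · obtain ⟨z, h1, h2⟩ := Eij_spec y w hw h
      exact ⟨z, fun _ => ⟨h1, h2⟩⟩
    · exact ⟨0, fun h' => absurd h' h⟩
  choose zs hzs using H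
  -- the optimal step function on the same partition
  set g : Fin n → ℝ := fun i => zs (ik (idx i)) (jk (idx i)) with hgdef
  have hgstep : IsStepFn n b g := by
    refine ⟨j, hj0, hjb, hstep, fun k => zs (ik k) (jk k), ?_⟩
    intro i k hk h1 h2
    simp only [hgdef]
    rw [huniq i k hk h1 h2]
  have hidxK : ∀ i : Fin n, idx i ∈ K := by
    intro i
    rw [hKdef, Finset.mem_filter, Finset.mem_range]
    exact ⟨hidxle i, lt_of_le_of_lt (hidx1 i) (hidx2 i)⟩
  have hmemI : ∀ i : Fin n, i ∈ Finset.Icc (ik (idx i)) (jk (idx i)) := by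
    intro i
    rw [hmem_iff _ (hidxK i) i]
    exact ⟨hidx1 i, hidx2 i⟩
  set M := K.sup' hK (fun k => Eij y w (ik k) (jk k)) with hMdef
  have herrg : errW y w g = M := by
    apply le_antisymm
    · apply Finset.sup'_le
      intro i _
      have hkK := hidxK i
      have h1 : w i * |g i - y i| ≤ Eij y w (ik (idx i)) (jk (idx i)) := by
        rw [(hzs _ _ (hik_le _ hkK)).1]
        exact Finset.le_sup' (fun m => w m * |zs (ik (idx i)) (jk (idx i)) - y m|)
          (hmemI i)
      exact le_trans h1 (Finset.le_sup' (fun k => Eij y w (ik k) (jk k)) hkK)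
    · apply Finset.sup'_le
      intro k hkK
      rw [(hzs _ _ (hik_le _ hkK)).1]
      apply Finset.sup'_le
      intro m hm
      have hm' := (hmem_iff k hkK m).mp hm
      have hidxm : idx m = k := huniq m k (hKfact k hkK).1 hm'.1 hm'.2
      have hgm : g m = zs (ik k) (jk k) := by rw [hgdef]; simp only [hidxm]
      rw [← hgm]
      exact Finset.le_sup' (fun i => w i * |g i - y i|) (Finset.mem_univ m)
  obtain ⟨k0, hk0K, hk0⟩ := Finset.exists_mem_eq_sup' hK (fun k => Eij y w (ik k) (jk k))
  refine ⟨ik k0, jk k0, hik_le _ hk0K, ?_, g, hgstep, ?_⟩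
  · rw [← hk0]
    exact Finset.sup'_le _ _ hpiece
  · rw [herrg, hMdef]
    exact hk0

end Main

/-- The optimal `b`-step error `ε_opt` equals `opt {i,...,j}` for some nonempty
interval `{i,...,j} ⊆ {1,...,n}`, i.e. it is an entry of the matrix `E`. -/
theorem optStepError_eq_intervalOpt (n b : ℕ) [NeZero n] (hb : 1 ≤ b) (hbn : b ≤ n)
    (y w : Fin n → ℝ) (hw : ∀ i, 0 < w i) :
    ∃ i j : Fin n, ∃ h : i ≤ j,
      sInf {e | ∃ f, IsStepFn n b f ∧ errW y w f = e} =
        ⨅ z : ℝ, (Finset.Icc i j).sup' (Finset.nonempty_Icc.mpr h)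
          fun k => w k * |z - y k| := by
  classical
  set S := {e | ∃ f, IsStepFn n b f ∧ errW y w f = e} with hSdef
  -- S is nonempty (constant function)
  have hf0 : IsStepFn n b (fun _ : Fin n => (0 : ℝ)) := by
    refine ⟨fun k => if k = 0 then 0 else n, if_pos rfl, if_neg (by omega), ?_,
      fun _ => 0, fun _ _ _ _ _ => rfl⟩
    intro k
    by_cases h : k = 0
    · simp [h]
    · simp [h]
  have hSne : S.Nonempty := ⟨_, _, hf0, rfl⟩
  have herrnn : ∀ f : Fin n → ℝ, 0 ≤ errW y w f := by
    intro f
    have i : Fin n := ⟨0, Nat.pos_of_ne_zero (NeZero.ne n)⟩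
    exact le_trans (mul_nonneg (hw i).le (abs_nonneg _))
      (Finset.le_sup' (fun i => w i * |f i - y i|) (Finset.mem_univ i))
  have hSbdd : BddBelow S := ⟨0, by rintro e ⟨f, _, rfl⟩; exact herrnn f⟩
  set D := {e | e ∈ S ∧ ∃ i j : Fin n, i ≤ j ∧ Eij y w i j = e} with hDdef
  have hDfin : D.Finite := by
    apply Set.Finite.subset (Set.finite_range (fun p : Fin n × Fin n => Eij y w p.1 p.2))
    rintro e ⟨_, i, j, _, he⟩
    exact ⟨(i, j), he⟩
  have hDne : D.Nonempty := by
    obtain ⟨i, j, hij, _, g, hg, hge⟩ := stepfn_key hb y w hw _ hf0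
    exact ⟨Eij y w i j, ⟨g, hg, hge⟩, i, j, hij, rfl⟩
  have hDS : D ⊆ S := fun e he => he.1
  have hkey : sInf S = sInf D := by
    apply le_antisymm
    · exact csInf_le_csInf hSbdd hDne hDS
    · apply le_csInf hSne
      rintro e ⟨f, hf, rfl⟩
      obtain ⟨i, j, hij, hle, g, hg, hge⟩ := stepfn_key hb y w hw f hf
      exact le_trans (csInf_le hDfin.bddBelow ⟨⟨g, hg, hge⟩, i, j, hij, rfl⟩) hle
  obtain ⟨-, i, j, hij, heq⟩ := hDne.csInf_mem hDfin
  refine ⟨i, j, hij, ?_⟩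
  rw [hkey, ← heq, Eij, dif_pos hij]
end

section
/- For ε ≥ 0, there exists a b-step function with weighted L∞ error at most ε if and only if the greedy procedure succeeds: defining j_1 to be the largest index such that opt({1,...,j_1}) ≤ ε, and inductively j_{k+1} the largest index such that opt({j_k+1,...,j_{k+1}}) ≤ ε, one reaches j_b ≥ n (i.e., n is covered within b greedy steps). -/
/-- `f : ℕ → ℝ` is a `b`-step function on `{1,...,n}`. -/
def IsStepOn (n b : ℕ) (f : ℕ → ℝ) : Prop :=
  ∃ j : ℕ → ℕ, j 0 = 0 ∧ j b = n ∧ (∀ k, j k ≤ j (k + 1)) ∧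
    ∃ C : ℕ → ℝ, ∀ i k, k < b → j k < i → i ≤ j (k + 1) → f i = C k

/-- Optimal single-step error of `{i,...,j}`, `0` if `i > j`. -/
noncomputable def Emat (y w : ℕ → ℝ) (i j : ℕ) : ℝ :=
  if h : i ≤ j then
    ⨅ z : ℝ, (Finset.Icc i j).sup' (Finset.nonempty_Icc.mpr h) fun k => w k * |z - y k|
  else 0

private lemma clamp_abs {A B z t : ℝ} (hA : A ≤ t) (hB : t ≤ B) :
    |max A (min z B) - t| ≤ |z - t| := by
  have hAB : A ≤ B := le_trans hA hB
  rcases le_total z A with h | h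
  · rw [min_eq_left (le_trans h hAB), max_eq_left h]
    rw [abs_sub_comm, abs_of_nonneg (by linarith), abs_sub_comm, abs_of_nonneg (by linarith)]
    linarith
  · rcases le_total z B with h' | h'
    · rw [min_eq_left h', max_eq_right h]
    · rw [min_eq_right h', max_eq_right hAB]
      rw [abs_of_nonneg (by linarith), abs_of_nonneg (by linarith)]
      linarith

private lemma sup'_abs_nonneg (y w : ℕ → ℝ) (hw : ∀ i, 0 < w i) {i j : ℕ} (h : i ≤ j) (z : ℝ) :
    0 ≤ (Finset.Icc i j).sup' (Finset.nonempty_Icc.mpr h) (fun k => w k * |z - y k|) := by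
  have hi : i ∈ Finset.Icc i j := Finset.mem_Icc.mpr ⟨le_refl i, h⟩
  exact le_trans (mul_nonneg (hw i).le (abs_nonneg _))
    (Finset.le_sup' (fun k => w k * |z - y k|) hi)

private lemma Emat_le (y w : ℕ → ℝ) (hw : ∀ i, 0 < w i) {i j : ℕ} (h : i ≤ j) (z : ℝ) :
    Emat y w i j ≤
      (Finset.Icc i j).sup' (Finset.nonempty_Icc.mpr h) (fun k => w k * |z - y k|) := by
  rw [Emat, dif_pos h]
  exact ciInf_le ⟨0, by rintro x ⟨z', rfl⟩; exact sup'_abs_nonneg y w hw h z'⟩ z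

private lemma Emat_attained (y w : ℕ → ℝ) (hw : ∀ i, 0 < w i) {i j : ℕ} (h : i ≤ j) :
    ∃ z, (Finset.Icc i j).sup' (Finset.nonempty_Icc.mpr h) (fun k => w k * |z - y k|)
      = Emat y w i j := by
  classical
  have hne : (Finset.Icc i j).Nonempty := Finset.nonempty_Icc.mpr h
  set F : ℝ → ℝ := fun z => (Finset.Icc i j).sup' hne (fun k => w k * |z - y k|) with hF
  have contF : Continuous F := by
    rw [continuous_iff_continuousAt]
    intro x
    exact ContinuousAt.finset_sup'_apply hne (fun k _ => by fun_prop)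
  set A := (Finset.Icc i j).inf' hne y with hA
  set B := (Finset.Icc i j).sup' hne y with hB
  have hAB : A ≤ B := by
    obtain ⟨k, hk⟩ := hne
    exact le_trans (Finset.inf'_le y hk) (Finset.le_sup' y hk)
  obtain ⟨z0, hz0mem, hz0⟩ := (isCompact_Icc (a := A) (b := B)).exists_isMinOn
      (Set.nonempty_Icc.mpr hAB) contF.continuousOn
  refine ⟨z0, ?_⟩
  rw [Emat, dif_pos h]
  apply le_antisymm
  · apply le_ciInf
    intro z
    have hz'mem : max A (min z B) ∈ Set.Icc A B :=
      ⟨le_max_left _ _, max_le hAB (min_le_right _ _)⟩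
    have h1 : F z0 ≤ F (max A (min z B)) := hz0 hz'mem
    have h2 : F (max A (min z B)) ≤ F z := by
      apply Finset.sup'_le
      intro k hk
      refine le_trans ?_ (Finset.le_sup' _ hk)
      have hAk : A ≤ y k := Finset.inf'_le y hk
      have hBk : y k ≤ B := Finset.le_sup' y hk
      exact mul_le_mul_of_nonneg_left (clamp_abs hAk hBk) (hw k).le
    exact le_trans h1 h2
  · exact ciInf_le ⟨0, by rintro x ⟨z', rfl⟩; exact sup'_abs_nonneg y w hw h z'⟩ z0

/-- Feasibility of `ε` is equivalent to success of the greedy procedure: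
`g (k+1)` is the largest `j ≤ n` with `opt {g k + 1, ..., j} ≤ ε`, and
feasibility holds iff `g b = n`. -/
theorem feasible_iff_greedy (n b : ℕ) (hn : 1 ≤ n) (y w : ℕ → ℝ)
    (hw : ∀ i, 0 < w i) (ε : ℝ) (hε : 0 ≤ ε)
    (hsingle : ∀ i, 1 ≤ i → i ≤ n → Emat y w i i ≤ ε)
    (g : ℕ → ℕ) (hg0 : g 0 = 0) (hgle : ∀ k, g k ≤ n)
    (hgreedy : ∀ k, g k < n →
      g k < g (k + 1) ∧ Emat y w (g k + 1) (g (k + 1)) ≤ ε ∧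
        ∀ m, m ≤ n → g k < m → Emat y w (g k + 1) m ≤ ε → m ≤ g (k + 1))
    (hstop : ∀ k, g k = n → g (k + 1) = n) :
    (∃ f, IsStepOn n b f ∧
        (Finset.Icc 1 n).sup' (Finset.nonempty_Icc.mpr hn)
          (fun i => w i * |f i - y i|) ≤ ε) ↔ g b = n := by
  classical
  constructor
  · rintro ⟨f, ⟨j, hj0, hjb, hjmono, C, hC⟩, herr⟩
    have hjm : Monotone j := monotone_nat_of_le_succ hjmono
    have key : ∀ k, k ≤ b → j k ≤ g k := by
      intro k
      induction k with
      | zero => intro _; simp [hj0, hg0]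
      | succ k ih =>
        intro hkb
        have hkb' : k < b := hkb
        have ihk := ih (Nat.le_of_succ_le hkb)
        have hjk1n : j (k + 1) ≤ n := hjb ▸ hjm hkb
        rcases eq_or_lt_of_le (hgle k) with hgkn | hgkn
        · rw [hstop k hgkn]; exact hjk1n
        · rcases le_or_gt (j (k + 1)) (g k) with hle | hlt
          · exact le_trans hle (hgreedy k hgkn).1.le
          · apply (hgreedy k hgkn).2.2 (j (k + 1)) hjk1n hlt
            have hle' : g k + 1 ≤ j (k + 1) := hlt
            refine le_trans (Emat_le y w hw hle' (C k)) ?_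
            apply Finset.sup'_le
            intro m hm
            obtain ⟨hm1, hm2⟩ := Finset.mem_Icc.mp hm
            have hfm : f m = C k := hC m k hkb' (lt_of_le_of_lt ihk (by omega)) hm2
            have hmn : m ∈ Finset.Icc 1 n := Finset.mem_Icc.mpr ⟨by omega, le_trans hm2 hjk1n⟩
            calc w m * |C k - y m| = w m * |f m - y m| := by rw [hfm]
              _ ≤ (Finset.Icc 1 n).sup' (Finset.nonempty_Icc.mpr hn)
                    (fun i => w i * |f i - y i|) := Finset.le_sup' (fun i => w i * |f i - y i|) hmn
              _ ≤ ε := herr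
    exact le_antisymm (hgle b) (hjb ▸ key b le_rfl)
  · intro hgb
    have hgmono : ∀ k, g k ≤ g (k + 1) := by
      intro k
      rcases eq_or_lt_of_le (hgle k) with h | h
      · rw [hstop k h, h]
      · exact (hgreedy k h).1.le
    have hgm : Monotone g := monotone_nat_of_le_succ hgmono
    set C : ℕ → ℝ := fun k => if h : g k + 1 ≤ g (k + 1) then
        Classical.choose (Emat_attained y w hw h) else 0 with hCdef
    have hblock : ∀ i, 1 ≤ i → i ≤ n → ∃ k, k < b ∧ g k < i ∧ i ≤ g (k + 1) := by
      intro i hi1 hin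
      have hb1 : 1 ≤ b := by
        by_contra hb
        push_neg at hb
        interval_cases b
        rw [hg0] at hgb
        omega
      have hex : ∃ k, i ≤ g (k + 1) :=
        ⟨b - 1, by rw [Nat.sub_add_cancel hb1, hgb]; exact hin⟩
      have hk0 : i ≤ g (Nat.find hex + 1) := Nat.find_spec hex
      have hlt : g (Nat.find hex) < i := by
        rcases Nat.eq_zero_or_pos (Nat.find hex) with h0 | h0
        · rw [h0, hg0]; exact hi1
        · have hmin := Nat.find_min hex (Nat.sub_lt h0 one_pos)
          push_neg at hmin
          have heq : Nat.find hex - 1 + 1 = Nat.find hex := by omega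
          rwa [heq] at hmin
      have hk0b : Nat.find hex < b := by
        by_contra hb
        push_neg at hb
        have := hgm hb
        omega
      exact ⟨Nat.find hex, hk0b, hlt, hk0⟩
    have huniq : ∀ i k k', g k < i → i ≤ g (k + 1) → g k' < i → i ≤ g (k' + 1) → k = k' := by
      intro i k k' h1 h2 h3 h4
      by_contra hne
      rcases Nat.lt_or_ge k k' with h | h
      · have h5 : g (k + 1) ≤ g k' := hgm h
        omega
      · have h' : k' < k := lt_of_le_of_ne h (Ne.symm hne)
        have h5 : g (k' + 1) ≤ g k := hgm h'
        omega
    set f : ℕ → ℝ := fun i =>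
      if h : ∃ k, k < b ∧ g k < i ∧ i ≤ g (k + 1) then C h.choose else 0 with hfdef
    have hfC : ∀ i k, k < b → g k < i → i ≤ g (k + 1) → f i = C k := by
      intro i k hkb h1 h2
      have hex : ∃ k, k < b ∧ g k < i ∧ i ≤ g (k + 1) := ⟨k, hkb, h1, h2⟩
      rw [hfdef]
      simp only [dif_pos hex]
      obtain ⟨_, h1', h2'⟩ := hex.choose_spec
      rw [huniq i hex.choose k h1' h2' h1 h2]
    refine ⟨f, ⟨g, hg0, hgb, hgmono, C, hfC⟩, ?_⟩
    apply Finset.sup'_le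
    intro i hi
    obtain ⟨hi1, hin⟩ := Finset.mem_Icc.mp hi
    obtain ⟨k, hkb, h1, h2⟩ := hblock i hi1 hin
    rw [hfC i k hkb h1 h2]
    have hle : g k + 1 ≤ g (k + 1) := by omega
    have hCk : C k = Classical.choose (Emat_attained y w hw hle) := by
      rw [hCdef]; simp only [dif_pos hle]
    have hspec := Classical.choose_spec (Emat_attained y w hw hle)
    have hgkn : g k < n := lt_of_lt_of_le h1 hin
    have hE : Emat y w (g k + 1) (g (k + 1)) ≤ ε := (hgreedy k hgkn).2.1
    have hmem : i ∈ Finset.Icc (g k + 1) (g (k + 1)) := Finset.mem_Icc.mpr ⟨h1, h2⟩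
    calc w i * |C k - y i|
        ≤ (Finset.Icc (g k + 1) (g (k + 1))).sup' (Finset.nonempty_Icc.mpr hle)
            (fun m => w m * |C k - y m|) := Finset.le_sup' (fun m => w m * |C k - y m|) hmem
      _ = Emat y w (g k + 1) (g (k + 1)) := by rw [hCk]; exact hspec
      _ ≤ ε := hE
end

section
/- The greedy step-assignment is optimal in a prefix sense: for any ε ≥ 0 and any k, if some sequence 1 ≤ i_1 < i_2 < ... < i_k covers steps with opt of each interval at most ε, then the greedy endpoints g_1,...,g_k (each maximal) satisfy g_m ≥ i_m for all m ≤ k. -/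
lemma Emat_mono_left (y w : ℕ → ℝ) (hw : ∀ i, 0 < w i) {a a' j : ℕ}
    (ha : a ≤ a') (haj : a' ≤ j) : Emat y w a' j ≤ Emat y w a j := by
  have h1 : a ≤ j := ha.trans haj
  unfold Emat
  rw [dif_pos haj, dif_pos h1]
  apply ciInf_mono
  · refine ⟨0, ?_⟩
    rintro x ⟨z, rfl⟩
    have hj : j ∈ Finset.Icc a' j := Finset.mem_Icc.mpr ⟨haj, le_rfl⟩
    calc (0:ℝ) ≤ w j * |z - y j| :=
          mul_nonneg (hw j).le (abs_nonneg _)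
      _ ≤ _ := Finset.le_sup' (fun k => w k * |z - y k|) hj
  · intro z
    apply Finset.sup'_le
    intro b hb
    exact Finset.le_sup' (fun k => w k * |z - y k|) (Finset.Icc_subset_Icc_left ha hb)

/-- Greedy prefix optimality: if `i 1 < ... < i k` covers steps with error `≤ ε`
then the greedy endpoints satisfy `g m ≥ i m` for all `m ≤ k`. -/
theorem greedy_prefix_optimal (n : ℕ) (hn : 1 ≤ n) (y w : ℕ → ℝ)
    (hw : ∀ i, 0 < w i) (ε : ℝ) (hε : 0 ≤ ε)
    (g : ℕ → ℕ) (hg0 : g 0 = 0) (hgle : ∀ k, g k ≤ n)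
    (hgreedy : ∀ k, g k < n →
      g k < g (k + 1) ∧ Emat y w (g k + 1) (g (k + 1)) ≤ ε ∧
        ∀ m, m ≤ n → g k < m → Emat y w (g k + 1) m ≤ ε → m ≤ g (k + 1))
    (hstop : ∀ k, g k = n → g (k + 1) = n)
    (k : ℕ) (i : ℕ → ℕ) (hi0 : i 0 = 0)
    (himono : ∀ m, m < k → i m < i (m + 1)) (hik : i k ≤ n)
    (hcov : ∀ m, m < k → Emat y w (i m + 1) (i (m + 1)) ≤ ε) :
    ∀ m, m ≤ k → i m ≤ g m := by
  -- monotone up to k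
  have hmono' : ∀ b, b ≤ k → ∀ a, a ≤ b → i a ≤ i b := by
    intro b
    induction b with
    | zero => intro _ a ha; interval_cases a; exact le_rfl
    | succ b ih =>
      intro hbk a ha
      rcases Nat.lt_succ_iff_lt_or_eq.mp (Nat.lt_succ_of_le ha) with h | h
      · exact le_trans (ih (le_of_lt hbk) a (Nat.lt_succ_iff.mp h))
          (le_of_lt (himono b (Nat.lt_of_succ_le hbk)))
      · exact le_of_eq (congrArg i h)
  intro m
  induction m with
  | zero => intro _; simp [hi0, hg0]
  | succ m ih =>
    intro hmk
    have hm : m < k := Nat.lt_of_succ_le hmk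
    have hIH : i m ≤ g m := ih (le_of_lt hm)
    have hin : i (m + 1) ≤ n := le_trans (hmono' k le_rfl (m + 1) hmk) hik
    rcases le_or_gt (i (m + 1)) (g m) with h | h
    · -- g m ≤ g (m+1)
      rcases lt_or_eq_of_le (hgle m) with hlt | heq
      · exact h.trans (le_of_lt (hgreedy m hlt).1)
      · exact h.trans (le_of_eq (heq.trans (hstop m heq).symm))
    · have hgn : g m < n := lt_of_lt_of_le h hin
      obtain ⟨_, _, hmax⟩ := hgreedy m hgn
      refine hmax (i (m + 1)) hin h ?_
      calc Emat y w (g m + 1) (i (m + 1))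
          ≤ Emat y w (i m + 1) (i (m + 1)) :=
            Emat_mono_left y w hw (Nat.succ_le_succ hIH) h
        _ ≤ ε := hcov m hm
end

section
/- For a nonempty finite weighted data set S with weighted L∞ mean z* and optimal error ε* = opt(S), there exist indices p,q ∈ S with y_p ≤ z* ≤ y_q such that w_p·(z*−y_p) = w_q·(y_q−z*) = ε*, unless ε* = 0. -/
lemma aux_tight_right {ι : Type*} (S : Finset ι) (hS : S.Nonempty)
    (y w : ι → ℝ) (hw : ∀ i ∈ S, 0 < w i) (zstar εstar : ℝ)
    (hmin : ∀ z : ℝ, (S.sup' hS fun i => w i * |zstar - y i|) ≤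
      S.sup' hS fun i => w i * |z - y i|)
    (hval : εstar = S.sup' hS fun i => w i * |zstar - y i|)
    (hne : εstar ≠ 0) :
    ∃ q ∈ S, zstar ≤ y q ∧ w q * (y q - zstar) = εstar := by
  by_contra hcon
  push_neg at hcon
  obtain ⟨i0, hi0⟩ := id hS
  have hle : ∀ i ∈ S, w i * |zstar - y i| ≤ εstar := fun i hi =>
    hval ▸ Finset.le_sup' (fun i => w i * |zstar - y i|) hi
  have hε0 : 0 < εstar := by
    have h0 : 0 ≤ w i0 * |zstar - y i0| :=
      mul_nonneg (hw i0 hi0).le (abs_nonneg _)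
    have h1 := hle i0 hi0
    rcases hne.lt_or_gt with h | h
    · linarith
    · exact h
  set g : ι → ℝ := fun i => if zstar ≤ y i then εstar - w i * (y i - zstar) else εstar with hg
  set γ := S.inf' hS g with hγ
  have hγpos : 0 < γ := by
    rw [hγ, Finset.lt_inf'_iff]
    intro i hi
    rw [hg]
    dsimp only
    split_ifs with h
    · have h1 := hle i hi
      rw [abs_of_nonpos (by linarith), neg_sub] at h1
      have h2 : w i * (y i - zstar) < εstar := lt_of_le_of_ne h1 (hcon i hi h)
      linarith
    · exact hε0
  have hγle : γ ≤ εstar := by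
    have h1 := Finset.inf'_le g hi0
    rw [hg] at h1
    dsimp only at h1
    split_ifs at h1 with h
    · have : 0 ≤ w i0 * (y i0 - zstar) :=
        mul_nonneg (hw i0 hi0).le (by linarith)
      linarith
    · linarith
  set W := S.sup' hS w with hW
  have hWpos : 0 < W := lt_of_lt_of_le (hw i0 hi0) (Finset.le_sup' w hi0)
  set δ := γ / (W + 1) with hδ
  have hδpos : 0 < δ := div_pos hγpos (by linarith)
  have hWδ : W * δ < γ := by
    have h1 : (W + 1) * δ = γ := by
      rw [hδ]; field_simp
    nlinarith
  have hwd : ∀ i ∈ S, w i * δ < γ := by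
    intro i hi
    have h1 : w i ≤ W := Finset.le_sup' w hi
    nlinarith
  have key : (S.sup' hS fun i => w i * |zstar - δ - y i|) < εstar := by
    rw [Finset.sup'_lt_iff]
    intro i hi
    have hwi := hw i hi
    have hlei := hle i hi
    have hwdi := hwd i hi
    by_cases h : zstar ≤ y i
    · have h2 : w i * (y i - zstar) ≤ εstar - γ := by
        have h3 := Finset.inf'_le g hi
        rw [hg] at h3; dsimp only at h3
        rw [if_pos h] at h3
        linarith
      rw [abs_of_nonpos (by linarith)]
      nlinarith
    · push_neg at h
      rw [abs_of_nonneg (by linarith)] at hlei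
      by_cases h3 : y i ≤ zstar - δ
      · rw [abs_of_nonneg (by linarith)]
        nlinarith
      · push_neg at h3
        rw [abs_of_nonpos (by linarith)]
        nlinarith
  have h5 := hmin (zstar - δ)
  rw [← hval] at h5
  have h6 : (S.sup' hS fun i => w i * |zstar - δ - y i|) =
      S.sup' hS fun i => w i * |zstar - δ - y i| := rfl
  linarith [h5.trans_lt (h6 ▸ key)]

/-- At the weighted L∞ mean `zstar` with optimal error `εstar ≠ 0`, there exist
`p, q ∈ S` with `y p ≤ zstar ≤ y q` whose errors are exactly `εstar` on both sides. -/
theorem exists_tight_pair {ι : Type*} (S : Finset ι) (hS : S.Nonempty)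
    (y w : ι → ℝ) (hw : ∀ i ∈ S, 0 < w i) (zstar εstar : ℝ)
    (hmin : ∀ z : ℝ, (S.sup' hS fun i => w i * |zstar - y i|) ≤
      S.sup' hS fun i => w i * |z - y i|)
    (hval : εstar = S.sup' hS fun i => w i * |zstar - y i|)
    (hne : εstar ≠ 0) :
    ∃ p ∈ S, ∃ q ∈ S, y p ≤ zstar ∧ zstar ≤ y q ∧
      w p * (zstar - y p) = εstar ∧ w q * (y q - zstar) = εstar := by
  have e : ∀ z : ℝ, (S.sup' hS fun i => w i * |z - (-(y i))|) =
      S.sup' hS fun i => w i * |(-z) - y i| := by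
    intro z
    apply Finset.sup'_congr hS rfl
    intro i hi
    rw [show z - (-(y i)) = -((-z) - y i) by ring, abs_neg]
  obtain ⟨q, hqS, hq1, hq2⟩ := aux_tight_right S hS y w hw zstar εstar hmin hval hne
  obtain ⟨p, hpS, hp1, hp2⟩ := aux_tight_right S hS (fun i => -(y i)) w hw (-zstar) εstar
    (by
      intro z
      rw [e, e]
      simpa using hmin (-z))
    (by rw [e, neg_neg]; exact hval) hne
  refine ⟨p, hpS, q, hqS, by linarith, hq1, by rw [← hp2]; ring_nf, hq2⟩
end
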